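/- There exists an integer n₀ such that for all n ≥ n₀ the following holds with R = n^{4/7}: let e_1 ≤ e_2 ≤ … ≤ e_K be the pairwise distances of P₃ that lie in the interval [2R − 3, 2R], listed in nondecreasing order. Then ∑_{i=1}^{K−1} (e_{i+1} − e_i)² ≤ 45·n^{−6/7}. -/

import Mathlib

open scoped Real

/-- The radius `R = n^{4/7}` (a real power of the positive integer `n`). -/
noncomputable def Rpow (n : ℕ) : ℝ := (n : ℝ) ^ ((4 : ℝ) / 7)

/-- The set `P₃` of points on the circle of radius `R = n^{4/7}` centered at the origin,
given in polar coordinates by `p_s = (R, 2s·R⁻¹)` for integers `0 ≤ s ≤ R/2` together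
with `q_t = (R, π + 2t·(R⁻¹ + 4·R⁻²))` for integers `0 ≤ t ≤ R/2`; the plane is modeled
by `ℂ`, a polar point `(R, θ)` being `R·exp(θ·I)`. -/
noncomputable def P3 (n : ℕ) : Finset ℂ :=
  letI := Classical.decEq ℂ
  ((Finset.range (⌊Rpow n / 2⌋₊ + 1)).image fun s : ℕ =>
      (Rpow n : ℂ) * Complex.exp ((2 * (s : ℝ) * (Rpow n)⁻¹ : ℝ) * Complex.I)) ∪
  ((Finset.range (⌊Rpow n / 2⌋₊ + 1)).image fun t : ℕ =>
      (Rpow n : ℂ) *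
        Complex.exp
          ((π + 2 * (t : ℝ) * ((Rpow n)⁻¹ + 4 * ((Rpow n ^ 2)⁻¹)) : ℝ) * Complex.I))

/-- The multiset of pairwise distances of `P₃` that lie in `[2R - 3, 2R]`, with
`R = n^{4/7}`. -/
noncomputable def P3distIn (n : ℕ) : Multiset ℝ :=
  letI := Classical.decEq ℂ
  (Multiset.map (Sym2.lift ⟨dist, fun a b => dist_comm a b⟩)
      (((P3 n).sym2.filter fun s => ¬ s.IsDiag).val)).filter
    fun x => 2 * Rpow n - 3 ≤ x ∧ x ≤ 2 * Rpow n

/-!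
The distance between `p_s` and `q_t` is `2R cos θ` with `Rθ = (t - s) + 4t/R`, and the values
`k + 4t/R` with `0 ≤ k ≤ t ≤ R/2` meet every interval `[w - 4/R, w)` with `0 < w ≤ R/4 - 1`.
Writing a distance `d ∈ [2R - 3, 2R)` as `2R cos x`, we have `sin² x ≤ 3/R`, so some `θ` lies in
`[x - 4/R², x)` and the next distance above `d` is at most `d + 2R sin x · 4/R² ≤ d + 15 R^{-3/2}`.
Hence every gap is at most `G = 15 R^{-3/2}`, and `∑ gap² ≤ G ∑ gap ≤ 3G = 45 n^{-6/7}`.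
-/

open Real

lemma Rpow_nonneg (n : ℕ) : 0 ≤ Rpow n := Real.rpow_nonneg n.cast_nonneg _

lemma Rpow_mono : Monotone Rpow := fun _ _ h =>
  Real.rpow_le_rpow (Nat.cast_nonneg _) (Nat.cast_le.2 h) (by norm_num)

lemma Rpow_ten_pow_seven : Rpow (10 ^ 7) = 10 ^ 4 := by
  rw [Rpow, Nat.cast_pow, Nat.cast_ofNat, ← Real.rpow_natCast, ← Real.rpow_mul (by norm_num)]
  norm_num

lemma rpow_neg_six_div_seven_eq (n : ℕ) :
    (n : ℝ) ^ ((-6 : ℝ) / 7) = (Rpow n * √(Rpow n))⁻¹ := by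
  rw [Rpow, Real.sqrt_eq_rpow, ← Real.rpow_mul n.cast_nonneg, ← Real.rpow_add' n.cast_nonneg
    (by norm_num), ← Real.rpow_neg n.cast_nonneg]
  norm_num

lemma norm_exp_mul_I_sub_exp_mul_I (a b : ℝ) :
    ‖Complex.exp (a * Complex.I) - Complex.exp (b * Complex.I)‖ = 2 * |sin ((a - b) / 2)| := by
  have hfactor : Complex.exp (a * Complex.I) - Complex.exp (b * Complex.I)
      = Complex.exp (b * Complex.I) * (Complex.exp (Complex.I * (a - b : ℝ)) - 1) := by
    rw [mul_sub, mul_one, ← Complex.exp_add]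
    push_cast
    ring_nf
  rw [hfactor, norm_mul, Complex.norm_exp_ofReal_mul_I, one_mul,
    Complex.norm_exp_I_mul_ofReal_sub_one, norm_mul, Real.norm_eq_abs, Real.norm_eq_abs,
    abs_two]

lemma dist_ofReal_mul_exp_mul_I {R : ℝ} (hR : 0 ≤ R) (a b : ℝ) :
    dist ((R : ℂ) * Complex.exp (a * Complex.I)) (R * Complex.exp (b * Complex.I))
      = 2 * R * |sin ((a - b) / 2)| := by
  rw [Complex.dist_eq, ← mul_sub, norm_mul, Complex.norm_real, Real.norm_eq_abs, abs_of_nonneg hR,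
    norm_exp_mul_I_sub_exp_mul_I]
  ring

lemma cos_sub_cos_le_sin_mul_sub {θ x : ℝ} (hθ : 0 ≤ θ) (hθx : θ ≤ x) (hx : x ≤ π / 2) :
    cos θ - cos x ≤ sin x * (x - θ) := by
  have hpi := pi_pos
  have hmid : sin ((θ + x) / 2) ≤ sin x :=
    sin_le_sin_of_le_of_le_pi_div_two (by linarith) hx (by linarith)
  have hhalf : sin ((x - θ) / 2) ≤ (x - θ) / 2 := sin_le (by linarith)
  have hmid0 : 0 ≤ sin ((θ + x) / 2) := sin_nonneg_of_nonneg_of_le_pi (by linarith) (by linarith)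
  have hhalf0 : 0 ≤ sin ((x - θ) / 2) := sin_nonneg_of_nonneg_of_le_pi (by linarith) (by linarith)
  have hprod := mul_le_mul hmid hhalf hhalf0 (hmid0.trans hmid)
  rw [cos_sub_cos, show (θ - x) / 2 = -((x - θ) / 2) by ring, sin_neg]
  linarith

lemma sin_sq_mul_le_three {R x : ℝ} (hcos : 2 * R - 3 ≤ 2 * R * cos x) : sin x ^ 2 * R ≤ 3 := by
  have h1 : (1 - cos x) * R ≤ 3 / 2 := by linarith
  rw [sin_sq]
  have h2 : 0 ≤ 1 + cos x := by linarith [neg_one_le_cos x]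
  nlinarith [cos_le_one x, mul_nonneg (sub_nonneg.2 h1) h2]

lemma exists_nat_mul_mem_Ico {a h : ℝ} (ha : 0 < a) (hh : 0 < h) :
    ∃ t : ℕ, a - h ≤ t * h ∧ t * h < a := by
  have hceil : 1 ≤ ⌈a / h⌉₊ := Nat.one_le_iff_ne_zero.2 (by simp [Nat.ceil_eq_zero]; positivity)
  have hle : a ≤ ⌈a / h⌉₊ * h := (div_le_iff₀ hh).1 (Nat.le_ceil _)
  have hlt : (⌈a / h⌉₊ - 1 : ℝ) * h < a :=
    (lt_div_iff₀ hh).1 (by linarith [Nat.ceil_lt_add_one (div_pos ha hh).le])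
  refine ⟨⌈a / h⌉₊ - 1, ?_, ?_⟩ <;> push_cast [hceil] <;> linarith

lemma exists_nat_add_nat_mul_mem_Ico {w h : ℝ} (hh : 0 < h) (hw : 0 < w) (hwh : w ≤ 1 / h - 1) :
    ∃ k t : ℕ, k ≤ t ∧ t * h < 2 ∧ w - h ≤ k + t * h ∧ k + t * h < w := by
  rcases lt_or_ge w 1 with hw1 | hw1
  · obtain ⟨t, hlo, hhi⟩ := exists_nat_mul_mem_Ico hw hh
    exact ⟨0, t, Nat.zero_le t, by linarith, by simpa using hlo, by simpa using hhi⟩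
  -- `k = ⌊w⌋ - 1` leaves a remainder `w - k ∈ [1, 2)`, which forces `t ≥ 1/h - 1 ≥ k`.
  have hfloor : 1 ≤ ⌊w⌋₊ := Nat.le_floor (by simpa using hw1)
  set k := ⌊w⌋₊ - 1 with hk
  have hkcast : (k : ℝ) = ⌊w⌋₊ - 1 := by rw [hk, Nat.cast_sub hfloor, Nat.cast_one]
  have hkw : (k : ℝ) + 1 ≤ w := by linarith [Nat.floor_le hw.le]
  have hwk : w < k + 2 := by linarith [Nat.lt_floor_add_one w]
  obtain ⟨t, hlo, hhi⟩ := exists_nat_mul_mem_Ico (a := w - k) (by linarith) hh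
  have hkt : (k : ℝ) * h ≤ t * h := by
    have : (1 / h - 1) * h = 1 - h := by field_simp
    nlinarith
  refine ⟨k, t, by exact_mod_cast le_of_mul_le_mul_right hkt hh, by linarith, by linarith,
    by linarith⟩

namespace P3

noncomputable def p (n s : ℕ) : ℂ :=
  (Rpow n : ℂ) * Complex.exp ((2 * (s : ℝ) * (Rpow n)⁻¹ : ℝ) * Complex.I)

noncomputable def q (n t : ℕ) : ℂ :=
  (Rpow n : ℂ) *
    Complex.exp ((π + 2 * (t : ℝ) * ((Rpow n)⁻¹ + 4 * ((Rpow n ^ 2)⁻¹)) : ℝ) * Complex.I)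

lemma dist_p_q (n s t : ℕ) :
    dist (p n s) (q n t) = 2 * Rpow n * |cos (((t : ℝ) - s) / Rpow n + 4 * t / Rpow n ^ 2)| := by
  rw [p, q, dist_ofReal_mul_exp_mul_I (Rpow_nonneg n)]
  congr 1
  rw [show (2 * (s : ℝ) * (Rpow n)⁻¹ - (π + 2 * t * ((Rpow n)⁻¹ + 4 * (Rpow n ^ 2)⁻¹))) / 2
      = -(((t : ℝ) - s) / Rpow n + 4 * t / Rpow n ^ 2 + π / 2) by ring,
    sin_neg, abs_neg, sin_add_pi_div_two]

lemma dist_p_q_mem_P3distIn {n s t : ℕ} (hs : (s : ℝ) ≤ Rpow n / 2) (ht : (t : ℝ) ≤ Rpow n / 2)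
    (hR : 3 < 2 * Rpow n) (hlo : 2 * Rpow n - 3 ≤ dist (p n s) (q n t))
    (hhi : dist (p n s) (q n t) ≤ 2 * Rpow n) :
    dist (p n s) (q n t) ∈ P3distIn n := by
  classical
  have hmem : ∀ {u : ℕ}, (u : ℝ) ≤ Rpow n / 2 → u ∈ Finset.range (⌊Rpow n / 2⌋₊ + 1) :=
    fun hu => Finset.mem_range_succ_iff.2 (Nat.le_floor hu)
  rw [P3distIn, Multiset.mem_filter]
  refine ⟨Multiset.mem_map.2 ⟨s(p n s, q n t), ?_, rfl⟩, hlo, hhi⟩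
  rw [Finset.mem_val]
  refine Finset.mem_filter.2 ⟨Finset.mk_mem_sym2_iff.2 ⟨?_, ?_⟩, ?_⟩
  · exact Finset.mem_union_left _ (Finset.mem_image.2 ⟨s, hmem hs, rfl⟩)
  · exact Finset.mem_union_right _ (Finset.mem_image.2 ⟨t, hmem ht, rfl⟩)
  · exact Sym2.mk_isDiag_iff.not.2 (dist_ne_zero.1 (by linarith))

lemma dist_p_sub_q {n k t : ℕ} (hkt : k ≤ t) :
    dist (p n (t - k)) (q n t)
      = 2 * Rpow n * |cos ((k + t * (4 / Rpow n)) / Rpow n)| := by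
  rw [dist_p_q, Nat.cast_sub hkt]
  congr 3
  ring

lemma exists_dist_p_q_eq_two_mul_cos {n : ℕ} (hR : 10 ≤ Rpow n) {x : ℝ} (hx0 : 0 < x)
    (hx : x ≤ 1 / 10) :
    ∃ s t : ℕ, (s : ℝ) ≤ Rpow n / 2 ∧ (t : ℝ) ≤ Rpow n / 2 ∧ ∃ θ, 0 ≤ θ ∧ θ < x ∧
      x - θ ≤ 4 / Rpow n ^ 2 ∧ dist (p n s) (q n t) = 2 * Rpow n * cos θ := by
  set R := Rpow n
  have hR0 : 0 < R := by linarith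
  obtain ⟨k, t, hkt, ht, hθlo, hθhi⟩ := exists_nat_add_nat_mul_mem_Ico (h := 4 / R) (w := R * x)
    (by positivity) (by positivity) (by rw [one_div_div]; nlinarith)
  set θ := (k + t * (4 / R)) / R with hθ
  have hθ0 : 0 ≤ θ := by positivity
  have hθx : θ < x := by rw [div_lt_iff₀ hR0]; linarith
  have hxθ : x - θ ≤ 4 / R ^ 2 := by
    rw [show x - θ = (R * x - (k + t * (4 / R))) / R by rw [hθ]; field_simp, sq, ← div_div]
    gcongr
    linarith
  have htR : (t : ℝ) ≤ R / 2 := by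
    rw [mul_div_assoc', div_lt_iff₀ hR0] at ht
    linarith
  refine ⟨t - k, t, le_trans (by exact_mod_cast Nat.sub_le t k) htR, htR, θ, hθ0, hθx, hxθ, ?_⟩
  have hcosθ : 0 < cos θ := cos_pos_of_mem_Ioo ⟨by linarith [pi_pos], by linarith [pi_gt_three]⟩
  rw [dist_p_sub_q hkt]
  exact congrArg (2 * R * ·) (abs_of_pos hcosθ)

end P3

lemma exists_mem_P3distIn_mem_Ioc {n : ℕ} (hR : (10 : ℝ) ^ 4 ≤ Rpow n) {d : ℝ}
    (hlo : 2 * Rpow n - 3 ≤ d) (hhi : d < 2 * Rpow n) :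
    ∃ d' ∈ P3distIn n, d < d' ∧ d' ≤ d + 15 / (Rpow n * √(Rpow n)) := by
  set R := Rpow n
  have hR0 : 0 < R := by linarith
  set x := arccos (d / (2 * R))
  have hc1 : d / (2 * R) < 1 := (div_lt_one (by positivity)).2 hhi
  have hc0 : 0 ≤ d / (2 * R) := div_nonneg (by linarith) (by positivity)
  have hx0 : 0 < x := arccos_pos.2 hc1
  have hxπ : x ≤ π / 2 := arccos_le_pi_div_two.2 hc0
  have hcos : 2 * R * cos x = d := by
    rw [cos_arccos (by linarith) hc1.le]
    field_simp
  have hsin0 : 0 ≤ sin x := sin_nonneg_of_nonneg_of_le_pi hx0.le (by linarith [pi_pos])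
  have hsin : sin x ^ 2 * R ≤ 3 := sin_sq_mul_le_three (by linarith)
  have hxsin : x / 2 ≤ sin x := by
    have := mul_le_sin hx0.le hxπ
    have : 1 / 2 ≤ 2 / π := by rw [div_le_div_iff₀ two_pos pi_pos]; linarith [pi_le_four]
    nlinarith
  obtain ⟨s, t, hs, ht, θ, hθ0, hθx, hxθ, hD⟩ :=
    P3.exists_dist_p_q_eq_two_mul_cos (by linarith) hx0 (by nlinarith)
  have hgap : 2 * R * cos θ - d ≤ 15 / (R * √R) := calc
    2 * R * cos θ - d = 2 * R * (cos θ - cos x) := by rw [← hcos]; ring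
    _ ≤ 2 * R * (sin x * (4 / R ^ 2)) := by
      gcongr
      exact (cos_sub_cos_le_sin_mul_sub hθ0 hθx.le hxπ).trans (by gcongr)
    _ = 8 * (sin x * √R) / (R * √R) := by field_simp; ring
    _ ≤ 15 / (R * √R) := by
      gcongr
      nlinarith [sq_sqrt hR0.le, sqrt_nonneg R]
  have hθcos : cos x < cos θ := cos_lt_cos_of_nonneg_of_le_pi hθ0 (by linarith) hθx
  have hmem := P3.dist_p_q_mem_P3distIn hs ht (by linarith) (by rw [hD]; nlinarith)
    (by rw [hD]; nlinarith [cos_le_one θ])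
  exact ⟨_, hmem, by rw [hD]; nlinarith, by rw [hD]; linarith⟩

section SortedEnumeration

variable {K : ℕ} {e : ℕ → ℝ}

lemma sum_sq_sub_le_mul_sub {G : ℝ} (hmono : ∀ i, i + 1 < K → e i ≤ e (i + 1))
    (hgap : ∀ i, i + 1 < K → e (i + 1) - e i ≤ G) :
    ∑ i ∈ Finset.range (K - 1), (e (i + 1) - e i) ^ 2 ≤ G * (e (K - 1) - e 0) := by
  rw [← Finset.sum_range_sub e, Finset.mul_sum]
  refine Finset.sum_le_sum fun i hi => ?_
  have hi : i + 1 < K := by have := Finset.mem_range.1 hi; omega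
  rw [sq]
  exact mul_le_mul_of_nonneg_right (hgap i hi) (sub_nonneg.2 (hmono i hi))

lemma succ_le_of_lt_of_mem {S : Multiset ℝ} (hmono : ∀ i, i + 1 < K → e i ≤ e (i + 1))
    (hS : (Finset.range K).val.map e = S) {i : ℕ} (hi : i + 1 < K) {d : ℝ} (hd : d ∈ S)
    (hlt : e i < d) : e (i + 1) ≤ d := by
  have hmonoOn : MonotoneOn e (Set.Iio K) :=
    monotoneOn_of_le_succ Set.ordConnected_Iio fun a _ _ ha => hmono a ha
  obtain ⟨j, hj, rfl⟩ := Multiset.mem_map.1 (hS ▸ hd)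
  have hj : j < K := Finset.mem_range.1 hj
  have hij : i + 1 ≤ j := by
    by_contra! hji
    exact (hlt.trans_le (hmonoOn hj (show i < K by omega) (by omega))).false
  exact hmonoOn (show i + 1 < K from hi) hj hij

end SortedEnumeration

/-- For all sufficiently large `n`: if `e 0 ≤ e 1 ≤ … ≤ e (K-1)` is the nondecreasing
enumeration of the pairwise distances of `P₃` lying in `[2R - 3, 2R]` (with
`R = n^{4/7}`), then `∑ (e_{i+1} - e_i)² ≤ 45·n^{-6/7}`. -/
theorem P3_sum_sq_gaps :
    ∃ n₀ : ℕ, ∀ n : ℕ, n₀ ≤ n →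
      ∀ K : ℕ, ∀ e : ℕ → ℝ,
        K = (P3distIn n).card →
        (∀ i, i + 1 < K → e i ≤ e (i + 1)) →
        (Finset.range K).val.map e = P3distIn n →
        ∑ i ∈ Finset.range (K - 1), (e (i + 1) - e i) ^ 2
          ≤ 45 * (n : ℝ) ^ ((-6 : ℝ) / 7) := by
  refine ⟨10 ^ 7, fun n hn K e _ hmono hmap => ?_⟩
  have hR : (10 : ℝ) ^ 4 ≤ Rpow n := Rpow_ten_pow_seven ▸ Rpow_mono hn
  have hbounds : ∀ i < K, 2 * Rpow n - 3 ≤ e i ∧ e i ≤ 2 * Rpow n := fun i hi => by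
    have hmem : e i ∈ P3distIn n := hmap ▸ Multiset.mem_map_of_mem e (Finset.mem_range.2 hi)
    classical
    exact (Multiset.mem_filter.1 hmem).2
  set G := 15 / (Rpow n * √(Rpow n))
  have hgap : ∀ i, i + 1 < K → e (i + 1) - e i ≤ G := by
    intro i hi
    rcases (hmono i hi).lt_or_eq with hlt | heq
    · obtain ⟨d, hd, hlt', hle⟩ := exists_mem_P3distIn_mem_Ioc hR (hbounds i (by omega)).1
        (hlt.trans_le (hbounds (i + 1) hi).2)
      linarith [succ_le_of_lt_of_mem hmono hmap hi hd hlt']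
    · rw [heq, sub_self]
      positivity
  have hspread : e (K - 1) - e 0 ≤ 3 := by
    rcases K.eq_zero_or_pos with rfl | hK
    · norm_num
    · linarith [hbounds (K - 1) (by omega), hbounds 0 hK]
  calc ∑ i ∈ Finset.range (K - 1), (e (i + 1) - e i) ^ 2
      ≤ G * (e (K - 1) - e 0) := sum_sq_sub_le_mul_sub hmono hgap
    _ ≤ G * 3 := by gcongr
    _ = 45 * (n : ℝ) ^ ((-6 : ℝ) / 7) := by rw [rpow_neg_six_div_seven_eq]; ring
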